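/- For every 0 ≤ s ≤ t ≤ T with t > 0, the conditional expectation of B_s given the path σ-algebra of B on [t,T] is E[B_s | F̄^B_{t,T}] = (s/t) · B_t almost surely. -/

import Mathlib

/-!
Write `B_s = X + (s/t) B_t` with `X = B_s - (s/t) B_t`. The pair `(B_s, B_t)` is Gaussian with
`Cov(B_s, B_t) = s = (s/t) Var(B_t)`, so `X` is uncorrelated with, hence independent of, `B_t`.
Since `X` and `B_t` are measurable with respect to the past `σ(B_u : u ≤ t)`, they are jointly
independent of the increments `B_u - B_t`, `t < u ≤ T`; together with `X ⟂ B_t` this makes `X`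
independent of `σ(B_t) ⊔ σ(B_u - B_t : t < u ≤ T) ⊇ F̄^B_{t,T}`. Hence
`E[B_s | F̄^B_{t,T}] = E[X] + (s/t) B_t = (s/t) B_t`.
-/

open MeasureTheory ProbabilityTheory

/-- The σ-algebra generated by the path of `B` over `[s,t]`: `σ(B_u : s ≤ u ≤ t)`. -/
def pathSigma {Ω : Type*} (B : ℝ → Ω → ℝ) (s t : ℝ) : MeasurableSpace Ω :=
  ⨆ (u : ℝ) (_ : u ∈ Set.Icc s t),
    MeasurableSpace.comap (B u) Real.measurableSpace

section Independence

variable {Ω : Type*} {mΩ : MeasurableSpace Ω} {μ : Measure Ω} [IsZeroOrProbabilityMeasure μ]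

lemma indep_sup_right_of_indep_sup {m n k : MeasurableSpace Ω}
    (hm : m ≤ mΩ) (hn : n ≤ mΩ) (hk : k ≤ mΩ)
    (hmn : Indep m n μ) (hmnk : Indep (m ⊔ n) k μ) : Indep m (n ⊔ k) μ := by
  let p : Set (Set Ω) := Set.image2 (· ∩ ·) {A | MeasurableSet[n] A} {C | MeasurableSet[k] C}
  have hp : IsPiSystem p := by
    rintro _ ⟨A, hA, C, hC, rfl⟩ _ ⟨A', hA', C', hC', rfl⟩ _
    exact ⟨A ∩ A', hA.inter hA', C ∩ C', hC.inter hC', Set.inter_inter_inter_comm _ _ _ _⟩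
  have hnk : n ⊔ k = MeasurableSpace.generateFrom p := by
    refine le_antisymm (sup_le (fun A hA => ?_) (fun C hC => ?_)) ?_
    · exact MeasurableSpace.measurableSet_generateFrom
        ⟨A, hA, Set.univ, .univ, Set.inter_univ A⟩
    · exact MeasurableSpace.measurableSet_generateFrom
        ⟨Set.univ, .univ, C, hC, Set.univ_inter C⟩
    · refine MeasurableSpace.generateFrom_le ?_
      rintro _ ⟨A, hA, C, hC, rfl⟩
      exact (le_sup_left (b := k) A hA).inter (le_sup_right (a := n) C hC)
  refine IndepSets.indep hm (sup_le hn hk) (fun _ h _ h' _ => h.inter h') hp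
    (@MeasurableSpace.generateFrom_measurableSet Ω m).symm hnk ((IndepSets_iff _ _ _).2 ?_)
  rintro D _ hD ⟨A, hA, C, hC, rfl⟩
  rw [Indep_iff] at hmn hmnk
  calc μ (D ∩ (A ∩ C)) = μ (D ∩ A ∩ C) := by rw [Set.inter_assoc]
    _ = μ D * μ A * μ C := by
      rw [hmnk _ _ ((le_sup_left (b := n) D hD).inter (le_sup_right (a := m) A hA)) hC,
        hmn _ _ hD hA]
    _ = μ D * μ (A ∩ C) := by
      rw [hmnk _ _ (le_sup_right (a := m) A hA) hC, mul_assoc]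

lemma indep_biSup_of_forall_finset {ι : Type*} {m : MeasurableSpace Ω}
    {n : ι → MeasurableSpace Ω} {S : Set ι} (hm : m ≤ mΩ) (hn : ∀ i, n i ≤ mΩ)
    (h : ∀ F : Finset ι, ↑F ⊆ S → Indep m (⨆ i ∈ F, n i) μ) :
    Indep m (⨆ i ∈ S, n i) μ := by
  classical
  let nF : {F : Finset ι // ↑F ⊆ S} → MeasurableSpace Ω := fun F => ⨆ i ∈ F.1, n i
  have hdir : Directed (· ≤ ·) nF := fun F G =>
    ⟨⟨F.1 ∪ G.1, by simpa using And.intro F.2 G.2⟩,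
      biSup_mono fun _ => Finset.mem_union_left _, biSup_mono fun _ => Finset.mem_union_right _⟩
  have hind : Indep (⨆ F, nF F) m μ := indep_iSup_of_directed_le (fun F => (h F.1 F.2).symm)
    (fun F => iSup₂_le fun i _ => hn i) hm hdir
  refine indep_of_indep_of_le_right hind.symm (iSup₂_le fun i hi => ?_)
  have hiS : ↑({i} : Finset ι) ⊆ S := by simpa using hi
  exact le_iSup_of_le (f := nF) ⟨{i}, hiS⟩
    (le_iSup₂_of_le (f := fun j (_ : j ∈ ({i} : Finset ι)) => n j) i
      (Finset.mem_singleton_self i) le_rfl)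

end Independence

section Gaussian

variable {Ω : Type*} {mΩ : MeasurableSpace Ω} {μ : Measure Ω}

lemma ProbabilityTheory.HasGaussianLaw.indepFun_sub_mul {X Y : Ω → ℝ}
    (hXY : HasGaussianLaw (fun ω ↦ (X ω, Y ω)) μ) {c : ℝ}
    (hc : cov[X, Y; μ] = c * Var[Y; μ]) :
    IndepFun (fun ω ↦ X ω - c * Y ω) Y μ := by
  have := hXY.isProbabilityMeasure
  let L : ℝ × ℝ →L[ℝ] ℝ × ℝ :=
    (ContinuousLinearMap.fst ℝ ℝ ℝ - c • ContinuousLinearMap.snd ℝ ℝ ℝ).prod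
      (ContinuousLinearMap.snd ℝ ℝ ℝ)
  have hL : HasGaussianLaw (fun ω ↦ (X ω - c * Y ω, Y ω)) μ := hXY.map_fun L
  refine hL.indepFun_of_covariance_eq_zero ?_
  have hY := hXY.snd.memLp_two
  rw [covariance_fun_sub_left hXY.fst.memLp_two (hY.const_mul c) hY, covariance_const_mul_left,
    covariance_self hY.aemeasurable, hc, sub_self]

end Gaussian

section ConditionalExpectation

variable {Ω : Type*} {mΩ : MeasurableSpace Ω} {μ : Measure Ω} [IsFiniteMeasure μ]

lemma condExp_add_of_indep_of_stronglyMeasurable {m : MeasurableSpace Ω} (hm : m ≤ mΩ)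
    {X Y : Ω → ℝ} (hX : Measurable[mΩ] X) (hXint : Integrable X μ)
    (hXm : Indep (MeasurableSpace.comap X inferInstance) m μ)
    (hY : StronglyMeasurable[m] Y) (hYint : Integrable Y μ) :
    μ[fun ω => X ω + Y ω | m] =ᵐ[μ] fun ω => μ[X] + Y ω := by
  have : IsFiniteMeasure (μ.trim hm) := isFiniteMeasure_trim hm
  have hXcond : μ[X | m] =ᵐ[μ] fun _ => μ[X] :=
    condExp_indep_eq hX.comap_le hm (measurable_iff_comap_le.2 le_rfl).stronglyMeasurable hXm
  filter_upwards [condExp_add hXint hYint m, hXcond] with ω hadd hXω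
  rw [← Pi.add_def, hadd, Pi.add_apply, hXω, condExp_of_stronglyMeasurable hm hY hYint]

end ConditionalExpectation

section PathSigma

variable {Ω : Type*} {B : ℝ → Ω → ℝ}

lemma measurable_pathSigma {l r v : ℝ} (hv : v ∈ Set.Icc l r) :
    Measurable[pathSigma B l r] (B v) :=
  measurable_iff_comap_le.2 (le_iSup₂ (f := fun u (_ : u ∈ Set.Icc l r) =>
    MeasurableSpace.comap (B u) Real.measurableSpace) v hv)

lemma pathSigma_mono {l r l' r' : ℝ} (h : Set.Icc l r ⊆ Set.Icc l' r') :
    pathSigma B l r ≤ pathSigma B l' r' :=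
  iSup₂_le fun _ hu => measurable_iff_comap_le.1 (measurable_pathSigma (h hu))

lemma pathSigma_le {mΩ : MeasurableSpace Ω} (hB : ∀ u, Measurable (B u)) (l r : ℝ) :
    pathSigma B l r ≤ mΩ :=
  iSup₂_le fun u _ => (hB u).comap_le

end PathSigma

section BrownianHypotheses

variable {Ω : Type*} {mΩ : MeasurableSpace Ω}

def HasGaussianIncrementsOn (B : ℝ → Ω → ℝ) (T : ℝ) (μ : Measure Ω) : Prop :=
  ∀ s t : ℝ, 0 ≤ s → s < t → t ≤ T →
    μ.map (fun ω => B t ω - B s ω) = gaussianReal 0 (Real.toNNReal (t - s))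

/-- Each increment is independent of the whole past path: stronger than the independence of
disjoint increments in `ProbabilityTheory.HasIndepIncrements`. -/
def HasIndepIncrementsOn (B : ℝ → Ω → ℝ) (T : ℝ) (μ : Measure Ω) : Prop :=
  ∀ s t : ℝ, 0 ≤ s → s < t → t ≤ T →
    Indep (MeasurableSpace.comap (fun ω => B t ω - B s ω) Real.measurableSpace)
      (pathSigma B 0 s) μ

end BrownianHypotheses

section Increments

variable {Ω : Type*} {mΩ : MeasurableSpace Ω} {μ : Measure Ω} {T : ℝ}
  {B : ℝ → Ω → ℝ}

def incrementSigma (B : ℝ → Ω → ℝ) (t : ℝ) (S : Set ℝ) : MeasurableSpace Ω :=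
  ⨆ u ∈ S, MeasurableSpace.comap (fun ω => B u ω - B t ω) Real.measurableSpace

lemma measurable_incrementSigma {t u : ℝ} {S : Set ℝ} (hu : u ∈ S) :
    Measurable[incrementSigma B t S] (fun ω => B u ω - B t ω) :=
  measurable_iff_comap_le.2 (le_iSup₂ (f := fun v (_ : v ∈ S) =>
    MeasurableSpace.comap (fun ω => B v ω - B t ω) Real.measurableSpace) u hu)

lemma incrementSigma_le (hB : ∀ u, Measurable (B u)) (t : ℝ) (S : Set ℝ) :
    incrementSigma B t S ≤ mΩ :=
  iSup₂_le fun u _ => ((hB u).sub (hB t)).comap_le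

lemma incrementSigma_le_pathSigma {l r t : ℝ} {S : Set ℝ} (ht : t ∈ Set.Icc l r)
    (hS : S ⊆ Set.Icc l r) : incrementSigma B t S ≤ pathSigma B l r :=
  iSup₂_le fun _ hu => ((measurable_pathSigma (hS hu)).sub (measurable_pathSigma ht)).comap_le

lemma pathSigma_le_sup_incrementSigma (t T : ℝ) :
    pathSigma B t T ≤
      MeasurableSpace.comap (B t) Real.measurableSpace ⊔ incrementSigma B t (Set.Ioc t T) := by
  refine iSup₂_le fun u hu => ?_
  rcases hu.1.eq_or_lt with rfl | htu
  · exact le_sup_left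
  · have hsum : Measurable[MeasurableSpace.comap (B t) Real.measurableSpace ⊔
        incrementSigma B t (Set.Ioc t T)] (fun ω => B t ω + (B u ω - B t ω)) :=
      ((comap_measurable (B t)).mono le_sup_left le_rfl).add
        ((measurable_incrementSigma (S := Set.Ioc t T) ⟨htu, hu.2⟩).mono le_sup_right le_rfl)
    simpa using hsum.comap_le

variable [IsZeroOrProbabilityMeasure μ]

lemma indep_pathSigma_incrementSigma_of_finset (hB : ∀ u, Measurable (B u))
    (hBindep : HasIndepIncrementsOn B T μ)
    {t : ℝ} (ht : 0 ≤ t) (F : Finset ℝ) (hF : ↑F ⊆ Set.Ioc t T) :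
    Indep (pathSigma B 0 t) (incrementSigma B t F) μ := by
  induction F using Finset.induction_on_max with
  | empty => simpa [incrementSigma] using indep_bot_right (pathSigma B 0 t)
  | insert a F hlt ih =>
    rw [Finset.coe_insert, Set.insert_subset_iff] at hF
    obtain ⟨ha, hF⟩ := hF
    obtain ⟨r, hr, htr, hFr⟩ : ∃ r ∈ insert t F, t ≤ r ∧ ∀ u ∈ F, u ≤ r :=
      ⟨_, Finset.max'_mem _ (Finset.insert_nonempty t F),
        Finset.le_max' _ _ (Finset.mem_insert_self t F),
        fun u hu => Finset.le_max' _ _ (Finset.mem_insert_of_mem hu)⟩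
    have hra : r < a := by
      rcases Finset.mem_insert.1 hr with rfl | hr
      exacts [ha.1, hlt r hr]
    -- `B_a - B_t = (B_a - B_r) + (B_r - B_t)`, and `B_a - B_r` is independent of the path up to
    -- `r`, which already determines `pathSigma B 0 t` and `incrementSigma B t F`.
    set W := fun ω => B a ω - B r ω
    have hpast : pathSigma B 0 t ⊔ incrementSigma B t F ≤ pathSigma B 0 r :=
      sup_le (pathSigma_mono (Set.Icc_subset_Icc le_rfl htr))
        (incrementSigma_le_pathSigma ⟨ht, htr⟩
          fun u hu => ⟨ht.trans (hF hu).1.le, hFr u hu⟩)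
    have hW : Indep (pathSigma B 0 t ⊔ incrementSigma B t F)
        (MeasurableSpace.comap W Real.measurableSpace) μ :=
      indep_of_indep_of_le_left (hBindep r a (ht.trans htr) hra ha.2).symm hpast
    have hZr : Measurable[incrementSigma B t F] (fun ω => B r ω - B t ω) := by
      rcases Finset.mem_insert.1 hr with rfl | hr
      · simp only [sub_self]; exact measurable_const
      · exact measurable_incrementSigma hr
    have hZa : Measurable[incrementSigma B t F ⊔ MeasurableSpace.comap W Real.measurableSpace]
        (fun ω => B a ω - B t ω) := by
      have hsum := (hZr.mono le_sup_left le_rfl).add ((comap_measurable W).mono le_sup_right le_rfl)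
      convert hsum using 1
      funext ω
      simp [W]
    rw [incrementSigma, Finset.coe_insert, iSup_insert]
    exact indep_of_indep_of_le_right
      (indep_sup_right_of_indep_sup (pathSigma_le hB 0 t) (incrementSigma_le hB t F)
        ((hB a).sub (hB r)).comap_le (ih hF) hW)
      (sup_le hZa.comap_le le_sup_left)

lemma indep_pathSigma_incrementSigma (hB : ∀ u, Measurable (B u))
    (hBindep : HasIndepIncrementsOn B T μ)
    {t : ℝ} (ht : 0 ≤ t) :
    Indep (pathSigma B 0 t) (incrementSigma B t (Set.Ioc t T)) μ :=
  indep_biSup_of_forall_finset (pathSigma_le hB 0 t) (fun u => ((hB u).sub (hB t)).comap_le)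
    (indep_pathSigma_incrementSigma_of_finset hB hBindep ht)

lemma indep_pathSigma_future_of_indepFun (hB : ∀ u, Measurable (B u))
    (hBindep : HasIndepIncrementsOn B T μ)
    {X : Ω → ℝ} {t : ℝ} (ht : 0 ≤ t) (hX : Measurable[pathSigma B 0 t] X)
    (hXB : IndepFun X (B t) μ) :
    Indep (MeasurableSpace.comap X Real.measurableSpace) (pathSigma B t T) μ := by
  have hBt := (measurable_pathSigma (B := B) ⟨ht, le_rfl⟩).comap_le
  refine indep_of_indep_of_le_right ?_ (pathSigma_le_sup_incrementSigma t T)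
  exact indep_sup_right_of_indep_sup (hX.comap_le.trans (pathSigma_le hB 0 t))
    (hB t).comap_le (incrementSigma_le hB t _) ((IndepFun_iff_Indep _ _ _).1 hXB)
    (indep_of_indep_of_le_left (indep_pathSigma_incrementSigma hB hBindep ht)
      (sup_le hX.comap_le hBt))

end Increments

section Brownian

variable {Ω : Type*} {mΩ : MeasurableSpace Ω} {μ : Measure Ω} {T : ℝ}
  {B : ℝ → Ω → ℝ}

lemma indepFun_brownian_increment
    (hBindep : HasIndepIncrementsOn B T μ)
    {s t : ℝ} (hs : 0 ≤ s) (hst : s < t) (htT : t ≤ T) :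
    IndepFun (B s) (fun ω => B t ω - B s ω) μ :=
  (IndepFun_iff_Indep _ _ _).2 <| indep_of_indep_of_le_left (hBindep s t hs hst htT).symm
    (measurable_pathSigma ⟨hs, le_rfl⟩).comap_le

lemma hasGaussianLaw_brownian_increment (hB : ∀ u, Measurable (B u))
    (hBgauss : HasGaussianIncrementsOn B T μ) {s t : ℝ} (hs : 0 ≤ s) (hst : s < t)
    (htT : t ≤ T) :
    HasGaussianLaw (fun ω => B t ω - B s ω) μ :=
  (⟨((hB t).sub (hB s)).aemeasurable, hBgauss s t hs hst htT⟩ : HasLaw _ _ μ).hasGaussianLaw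

variable [IsProbabilityMeasure μ]

lemma hasLaw_brownian (hB : ∀ u, Measurable (B u)) (hB0 : ∀ ω, B 0 ω = 0)
    (hBgauss : HasGaussianIncrementsOn B T μ)
    {t : ℝ} (ht : 0 ≤ t) (htT : t ≤ T) :
    HasLaw (B t) (gaussianReal 0 t.toNNReal) μ := by
  refine ⟨(hB t).aemeasurable, ?_⟩
  rcases ht.eq_or_lt with rfl | ht
  · simp [funext hB0, Measure.map_const, gaussianReal_zero_var]
  · simpa [hB0] using hBgauss 0 t le_rfl ht htT

lemma hasGaussianLaw_brownian_pair (hB : ∀ u, Measurable (B u)) (hB0 : ∀ ω, B 0 ω = 0)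
    (hBgauss : HasGaussianIncrementsOn B T μ)
    (hBindep : HasIndepIncrementsOn B T μ)
    {s t : ℝ} (hs : 0 ≤ s) (hst : s < t) (htT : t ≤ T) :
    HasGaussianLaw (fun ω => (B s ω, B t ω)) μ := by
  have hU := (hasLaw_brownian hB hB0 hBgauss hs (hst.le.trans htT)).hasGaussianLaw
  have hV := hasGaussianLaw_brownian_increment hB hBgauss hs hst htT
  let L : ℝ × ℝ →L[ℝ] ℝ × ℝ :=
    (ContinuousLinearMap.fst ℝ ℝ ℝ).prod
      (ContinuousLinearMap.fst ℝ ℝ ℝ + ContinuousLinearMap.snd ℝ ℝ ℝ)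
  simpa [L] using
    ((indepFun_brownian_increment hBindep hs hst htT).hasGaussianLaw hU hV).map_fun L

lemma covariance_brownian (hB : ∀ u, Measurable (B u)) (hB0 : ∀ ω, B 0 ω = 0)
    (hBgauss : HasGaussianIncrementsOn B T μ)
    (hBindep : HasIndepIncrementsOn B T μ)
    {s t : ℝ} (hs : 0 ≤ s) (hst : s < t) (htT : t ≤ T) :
    cov[B s, B t; μ] = s := by
  have hBs := hasLaw_brownian hB hB0 hBgauss hs (hst.le.trans htT)
  have hU := hBs.hasGaussianLaw.memLp_two
  have hV := (hasGaussianLaw_brownian_increment hB hBgauss hs hst htT).memLp_two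
  have hsplit : B t = B s + fun ω => B t ω - B s ω := by funext ω; simp
  rw [hsplit, covariance_add_right hU hU hV, covariance_self hU.aemeasurable, hBs.variance_eq,
    variance_id_gaussianReal,
    (indepFun_brownian_increment hBindep hs hst htT).covariance_eq_zero hU hV]
  simp [hs]

lemma indepFun_brownian_sub_mul (hB : ∀ u, Measurable (B u)) (hB0 : ∀ ω, B 0 ω = 0)
    (hBgauss : HasGaussianIncrementsOn B T μ)
    (hBindep : HasIndepIncrementsOn B T μ)
    {s t : ℝ} (hs : 0 ≤ s) (hst : s ≤ t) (htT : t ≤ T) (ht : 0 < t) :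
    IndepFun (fun ω => B s ω - s / t * B t ω) (B t) μ := by
  rcases hst.eq_or_lt with rfl | hst
  · simpa [div_self ht.ne'] using indepFun_const_left (μ := μ) (0 : ℝ) (B s)
  refine (hasGaussianLaw_brownian_pair hB hB0 hBgauss hBindep hs hst htT).indepFun_sub_mul ?_
  rw [covariance_brownian hB hB0 hBgauss hBindep hs hst htT,
    (hasLaw_brownian hB hB0 hBgauss ht.le htT).variance_eq, variance_id_gaussianReal,
    Real.coe_toNNReal _ ht.le, div_mul_cancel₀ _ ht.ne']

end Brownian

theorem condexp_brownian_given_future_path_general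
    {Ω : Type*} {mΩ : MeasurableSpace Ω} (μ : Measure Ω) [IsProbabilityMeasure μ]
    (T : ℝ)
    (B : ℝ → Ω → ℝ)
    (hBmeas : ∀ u : ℝ, Measurable (B u))
    (hB0 : ∀ ω, B 0 ω = 0)
    (hBgauss : ∀ s t : ℝ, 0 ≤ s → s < t → t ≤ T →
      μ.map (fun ω => B t ω - B s ω) = gaussianReal 0 (Real.toNNReal (t - s)))
    (hBindep : ∀ s t : ℝ, 0 ≤ s → s < t → t ≤ T →
      Indep (MeasurableSpace.comap (fun ω => B t ω - B s ω) Real.measurableSpace)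
        (pathSigma B 0 s) μ) :
    ∀ s t : ℝ, 0 ≤ s → s ≤ t → t ≤ T → 0 < t →
      μ[B s | pathSigma B t T] =ᵐ[μ] fun ω => (s / t) * B t ω := by
  intro s t hs hst htT ht
  have hBs := hasLaw_brownian hBmeas hB0 hBgauss hs (hst.trans htT)
  have hBt := hasLaw_brownian hBmeas hB0 hBgauss ht.le htT
  have hBt_int := hBt.hasGaussianLaw.integrable
  set X := fun ω => B s ω - s / t * B t ω
  have hX_past : Measurable[pathSigma B 0 t] X :=
    (measurable_pathSigma ⟨hs, hst⟩).sub
      ((measurable_pathSigma ⟨ht.le, le_rfl⟩).const_mul _)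
  have hX_indep : Indep (MeasurableSpace.comap X Real.measurableSpace) (pathSigma B t T) μ :=
    indep_pathSigma_future_of_indepFun hBmeas hBindep ht.le hX_past
      (indepFun_brownian_sub_mul hBmeas hB0 hBgauss hBindep hs hst htT ht)
  have hX_int : Integrable X μ := hBs.hasGaussianLaw.integrable.sub (hBt_int.const_mul _)
  have hX_mean : μ[X] = 0 := by
    rw [integral_sub hBs.hasGaussianLaw.integrable (hBt_int.const_mul _), integral_const_mul,
      hBs.integral_eq, hBt.integral_eq, integral_id_gaussianReal, integral_id_gaussianReal,
      mul_zero, sub_zero]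
  have hcond := condExp_add_of_indep_of_stronglyMeasurable (pathSigma_le hBmeas t T)
    (hX_past.mono (pathSigma_le hBmeas 0 t) le_rfl) hX_int hX_indep
    ((measurable_pathSigma ⟨le_rfl, htT⟩).const_mul (s / t)).stronglyMeasurable
    (hBt_int.const_mul _)
  simpa only [X, sub_add_cancel, hX_mean, zero_add] using hcond

/-- Let `B` be a standard Brownian motion on `[0,T]`.  For every `0 ≤ s ≤ t ≤ T` with
`t > 0`, the conditional expectation of `B_s` given the path σ-algebra of `B` on `[t,T]`
is `E[B_s | F̄^B_{t,T}] = (s/t) · B_t` a.s. -/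
theorem condexp_brownian_given_future_path
    {Ω : Type*} {mΩ : MeasurableSpace Ω} (μ : Measure Ω) [IsProbabilityMeasure μ]
    (T : ℝ) (hT : 0 < T)
    (B : ℝ → Ω → ℝ)
    (hBmeas : ∀ u : ℝ, Measurable (B u))
    (hB0 : ∀ ω, B 0 ω = 0)
    (hBcont : ∀ᵐ ω ∂μ, ContinuousOn (fun u => B u ω) (Set.Icc 0 T))
    (hBgauss : ∀ s t : ℝ, 0 ≤ s → s < t → t ≤ T →
      μ.map (fun ω => B t ω - B s ω) = gaussianReal 0 (Real.toNNReal (t - s)))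
    (hBindep : ∀ s t : ℝ, 0 ≤ s → s < t → t ≤ T →
      Indep (MeasurableSpace.comap (fun ω => B t ω - B s ω) Real.measurableSpace)
        (pathSigma B 0 s) μ) :
    ∀ s t : ℝ, 0 ≤ s → s ≤ t → t ≤ T → 0 < t →
      μ[B s | pathSigma B t T] =ᵐ[μ] fun ω => (s / t) * B t ω :=
  condexp_brownian_given_future_path_general (mΩ := mΩ) μ T B hBmeas hB0 hBgauss hBindep
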